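/- arXiv:2509.04654 — 2 statements merged into one kernel-verified Lean document; each statement's English description precedes it below -/
import Mathlib

section
/- Let (W, r_1, …, r_n) be a Strip Packing instance whose rectangles are listed in the FQW-ordering with Q ≠ ∅, and consider its BL packing. Then y_{r_L} ≤ h_max + h_{r_B}. -/
open scoped Classical
open MeasureTheory

/-- An axis-parallel rectangle, given by its width and its height. -/
structure Rect where
  w : ℝ
  h : ℝ

/-- A Strip Packing instance: a strip of width `W > 0` and `n` rectangles
`r 0, …, r (n-1)`, each with positive height and width at most `W`. -/
structure SPInstance (n : ℕ) where
  W : ℝ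
  r : Fin n → Rect
  W_pos : 0 < W
  w_pos : ∀ i, 0 < (r i).w
  w_le_W : ∀ i, (r i).w ≤ W
  h_pos : ∀ i, 0 < (r i).h

/-- The open box of rectangle `R` placed at position `p`. -/
def openBox (R : Rect) (p : ℝ × ℝ) : Set (ℝ × ℝ) :=
  Set.Ioo p.1 (p.1 + R.w) ×ˢ Set.Ioo p.2 (p.2 + R.h)

/-- The closed box of rectangle `R` placed at position `p`. -/
def closedBox (R : Rect) (p : ℝ × ℝ) : Set (ℝ × ℝ) :=
  Set.Icc p.1 (p.1 + R.w) ×ˢ Set.Icc p.2 (p.2 + R.h)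

namespace SPInstance

variable {n : ℕ}

/-- Rectangle `i` placed at `p` lies inside the strip. -/
def InStrip (I : SPInstance n) (i : Fin n) (p : ℝ × ℝ) : Prop :=
  0 ≤ p.1 ∧ p.1 + (I.r i).w ≤ I.W ∧ 0 ≤ p.2

/-- `pos` is a feasible packing: each rectangle lies in the strip and the open
boxes are pairwise disjoint. -/
def Feasible (I : SPInstance n) (pos : Fin n → ℝ × ℝ) : Prop :=
  (∀ i, I.InStrip i (pos i)) ∧
    Pairwise (fun i j : Fin n =>
      Disjoint (openBox (I.r i) (pos i)) (openBox (I.r j) (pos j)))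

/-- The height of a packing, `max_i (y_i + h_i)`. -/
noncomputable def height (I : SPInstance n) (pos : Fin n → ℝ × ℝ) : ℝ :=
  ⨆ i, ((pos i).2 + (I.r i).h)

/-- The minimum height of a feasible packing. -/
noncomputable def hOPT (I : SPInstance n) : ℝ :=
  sInf {H | ∃ pos, I.Feasible pos ∧ I.height pos = H}

/-- The maximum height of a rectangle of the instance. -/
noncomputable def hmax (I : SPInstance n) : ℝ :=
  ⨆ i, (I.r i).h

/-- Rectangle `i` can feasibly be placed at `p`, given the rectangles
`j < i` already placed at `pos j`. -/
def FeasibleAt (I : SPInstance n) (pos : Fin n → ℝ × ℝ) (i : Fin n) (p : ℝ × ℝ) : Prop :=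
  I.InStrip i p ∧ ∀ j : Fin n, j < i →
    Disjoint (openBox (I.r i) p) (openBox (I.r j) (pos j))

/-- `pos` is the Bottom-Left packing for the ordering `r 0, r 1, …`: every
rectangle is feasibly placed, at the lexicographically minimal `(y, x)`. -/
def IsBL (I : SPInstance n) (pos : Fin n → ℝ × ℝ) : Prop :=
  ∀ i : Fin n, I.FeasibleAt pos i (pos i) ∧
    ∀ p : ℝ × ℝ, I.FeasibleAt pos i p →
      (pos i).2 < p.2 ∨ ((pos i).2 = p.2 ∧ (pos i).1 ≤ p.1)

/-- Greedy construction of the set `F` of the FQW-partition, processing the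
rectangles in the order `σ 0, σ 1, …` and adding a rectangle whenever the
total width of `F` stays at most `W`. -/
noncomputable def greedyF (I : SPInstance n) (σ : Equiv.Perm (Fin n)) : Finset (Fin n) :=
  (List.finRange n).foldl
    (fun F k =>
      if (I.r (σ k)).w + ∑ f ∈ F, (I.r f).w ≤ I.W then insert (σ k) F else F) ∅

end SPInstance

/-- An FQW-partition datum: a processing order `σ` of the rectangles that is
sorted by decreasing height. -/
structure FQW {n : ℕ} (I : SPInstance n) where
  σ : Equiv.Perm (Fin n)
  sorted : ∀ k k' : Fin n, k ≤ k' → (I.r (σ k')).h ≤ (I.r (σ k)).h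

namespace FQW

variable {n : ℕ} {I : SPInstance n}

/-- The set `F` of the FQW-partition. -/
noncomputable def F (d : FQW I) : Finset (Fin n) := I.greedyF d.σ

/-- The set `𝒲` of the FQW-partition: rectangles not in `F` of width
greater than `W/2`. -/
noncomputable def Wset (d : FQW I) : Finset (Fin n) :=
  Finset.univ.filter fun i => i ∉ d.F ∧ I.W / 2 < (I.r i).w

/-- The set `Q` of the FQW-partition: all remaining rectangles. -/
noncomputable def Q (d : FQW I) : Finset (Fin n) :=
  Finset.univ.filter fun i => i ∉ d.F ∧ ¬ I.W / 2 < (I.r i).w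

/-- The rectangles of the instance are listed in the FQW-ordering: first `F`
sorted by decreasing height, then `Q` sorted by decreasing width, then `𝒲`. -/
def IsOrdered (d : FQW I) : Prop :=
  (∀ i : Fin n, i ∈ d.F ↔ (i : ℕ) < d.F.card) ∧
  (∀ i : Fin n, i ∈ d.Q ↔ d.F.card ≤ (i : ℕ) ∧ (i : ℕ) < d.F.card + d.Q.card) ∧
  (∀ i j : Fin n, (i : ℕ) ≤ (j : ℕ) → (j : ℕ) < d.F.card → (I.r j).h ≤ (I.r i).h) ∧
  (∀ i j : Fin n, d.F.card ≤ (i : ℕ) → (i : ℕ) ≤ (j : ℕ) →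
    (j : ℕ) < d.F.card + d.Q.card → (I.r j).w ≤ (I.r i).w)

end FQW

/-- `max {y_{r_1}, …, y_{r_i}}` (the first `i` rectangles, `0` if `i = 0`):
the lower boundary of the region `H_{i+1}` of the horizontal strip partition. -/
noncomputable def maxYBelow {n : ℕ} (pos : Fin n → ℝ × ℝ) (i : ℕ) : ℝ :=
  ⨆ j : {j : Fin n // (j : ℕ) < i}, (pos (j : Fin n)).2

namespace SPInstance

variable {n : ℕ}

/-- The horizontal line at height `t` is proper: it meets no top or
bottom face of a rectangle. -/
def ProperLine (I : SPInstance n) (pos : Fin n → ℝ × ℝ) (t : ℝ) : Prop :=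
  ∀ j : Fin n, t ≠ (pos j).2 ∧ t ≠ (pos j).2 + (I.r j).h

/-- Rectangle `j` intersects the horizontal line at height `t`. -/
def Intersects (I : SPInstance n) (pos : Fin n → ℝ × ℝ) (j : Fin n) (t : ℝ) : Prop :=
  (pos j).2 < t ∧ t < (pos j).2 + (I.r j).h

/-- The occupied part of the horizontal line at height `t`. -/
noncomputable def occupied (I : SPInstance n) (pos : Fin n → ℝ × ℝ) (t : ℝ) : Set ℝ :=
  ⋃ j ∈ {j : Fin n | I.Intersects pos j t}, Set.Icc (pos j).1 ((pos j).1 + (I.r j).w)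

/-- The occupied fraction of the horizontal line at height `t`. -/
noncomputable def occFrac (I : SPInstance n) (pos : Fin n → ℝ × ℝ) (t : ℝ) : ℝ :=
  (volume (I.occupied pos t)).toReal / I.W

/-- The region `H_{i+1}` (for the `0`-based index `i`) of the horizontal strip
partition: `[0, W] × [max {y_{r_1}, …, y_{r_i}}, y_{r_{i+1}})`. -/
def regionH (I : SPInstance n) (pos : Fin n → ℝ × ℝ) (i : Fin n) : Set (ℝ × ℝ) :=
  Set.Icc 0 I.W ×ˢ Set.Ico (maxYBelow pos (i : ℕ)) (pos i).2

/-- `G` is an unoccupied gap of the horizontal line at height `t`: a maximal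
subinterval of `[0, W]` disjoint from the occupied part of the line. -/
def IsGap (I : SPInstance n) (pos : Fin n → ℝ × ℝ) (t : ℝ) (G : Set ℝ) : Prop :=
  G.Nonempty ∧ G ⊆ Set.Icc 0 I.W ∧ G.OrdConnected ∧ Disjoint G (I.occupied pos t) ∧
    ∀ G' : Set ℝ, G'.OrdConnected → G' ⊆ Set.Icc 0 I.W →
      Disjoint G' (I.occupied pos t) → G ⊆ G' → G' = G

/-- `j` is a left supporter of `i`: it comes before `i` in the ordering, its
right face touches the left face of `i`, and their open `y`-ranges intersect. -/
def IsLeftSupporter (I : SPInstance n) (pos : Fin n → ℝ × ℝ) (i j : Fin n) : Prop :=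
  j < i ∧ (pos j).1 + (I.r j).w = (pos i).1 ∧
    (pos j).2 < (pos i).2 + (I.r i).h ∧ (pos i).2 < (pos j).2 + (I.r j).h

/-- `j` is a bottom supporter of `i`: it comes before `i` in the ordering, its
top face touches the bottom face of `i`, and their open `x`-ranges intersect. -/
def IsBottomSupporter (I : SPInstance n) (pos : Fin n → ℝ × ℝ) (i j : Fin n) : Prop :=
  j < i ∧ (pos j).2 + (I.r j).h = (pos i).2 ∧
    (pos j).1 < (pos i).1 + (I.r i).w ∧ (pos i).1 < (pos j).1 + (I.r j).w

/-- `j` is the leftmost bottom supporter of `i`. -/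
def IsLeftmostBottomSupporter (I : SPInstance n) (pos : Fin n → ℝ × ℝ)
    (i j : Fin n) : Prop :=
  I.IsBottomSupporter pos i j ∧
    ∀ j' : Fin n, I.IsBottomSupporter pos i j' → (pos j).1 ≤ (pos j').1

end SPInstance

/-- `iT` is the top rectangle `r_T` of `Q`: the rectangle of `Q` whose top face
is highest, ties broken by highest bottom face. -/
def IsTopRect {n : ℕ} (I : SPInstance n) (d : FQW I) (pos : Fin n → ℝ × ℝ)
    (iT : Fin n) : Prop :=
  iT ∈ d.Q ∧ ∀ j ∈ d.Q,
    (pos j).2 + (I.r j).h < (pos iT).2 + (I.r iT).h ∨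
    ((pos j).2 + (I.r j).h = (pos iT).2 + (I.r iT).h ∧ (pos j).2 ≤ (pos iT).2)

/-- `iL` is the left rectangle `r_L` of `Q`: the first rectangle of `Q` in the
ordering touching the left strip boundary, and `r_T` if there is none. -/
def IsLeftRect {n : ℕ} (I : SPInstance n) (d : FQW I) (pos : Fin n → ℝ × ℝ)
    (iT iL : Fin n) : Prop :=
  (iL ∈ d.Q ∧ (pos iL).1 = 0 ∧ ∀ j ∈ d.Q, (pos j).1 = 0 → iL ≤ j) ∨
  ((∀ j ∈ d.Q, (pos j).1 ≠ 0) ∧ iL = iT)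

/-- The region `H' = [0, W] × ([0, h_{r_T}] ∪ [y_{r_T}, y_{r_T} + h_{r_T}])`. -/
def Hprime {n : ℕ} (I : SPInstance n) (pos : Fin n → ℝ × ℝ) (iT : Fin n) :
    Set (ℝ × ℝ) :=
  Set.Icc 0 I.W ×ˢ
    (Set.Icc 0 (I.r iT).h ∪ Set.Icc (pos iT).2 ((pos iT).2 + (I.r iT).h))

/-- The type `T(ℓ)` of the proper horizontal line at height `t`: the rectangles
of `Q` intersecting the line whose index is smaller than the least index `j`
with `y_{r_j} > t` (equivalently, all rectangles with index at most theirs have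
bottom face at height at most `t`). -/
noncomputable def TypeOf {n : ℕ} (I : SPInstance n) (d : FQW I)
    (pos : Fin n → ℝ × ℝ) (t : ℝ) : Finset (Fin n) :=
  Finset.univ.filter fun i =>
    i ∈ d.Q ∧ I.Intersects pos i t ∧ ∀ j : Fin n, j ≤ i → (pos j).2 ≤ t

/-- `i` is `LM(ℓ)`: the rectangle of `T(ℓ)` with smallest `x`-coordinate. -/
def IsLM {n : ℕ} (I : SPInstance n) (d : FQW I) (pos : Fin n → ℝ × ℝ) (t : ℝ)
    (i : Fin n) : Prop :=
  i ∈ TypeOf I d pos t ∧ ∀ j ∈ TypeOf I d pos t, (pos i).1 ≤ (pos j).1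

/-- The horizontal line at height `t` lies in `H_{a+2} ∪ ⋯ ∪ H_L`, where `iL`
is the `0`-based index of `r_L` (so `L = iL + 1`, `1`-based). -/
def LineInHUnion {n : ℕ} (I : SPInstance n) (d : FQW I) (pos : Fin n → ℝ × ℝ)
    (iL : Fin n) (t : ℝ) : Prop :=
  ∃ m : Fin n, d.F.card + 1 ≤ (m : ℕ) ∧ m ≤ iL ∧
    maxYBelow pos (m : ℕ) ≤ t ∧ t < (pos m).2

/-- The space `H_{a+2} ∪ ⋯ ∪ H_L`, where `iL` is the `0`-based index of `r_L`. -/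
def regionHUnion {n : ℕ} (I : SPInstance n) (d : FQW I) (pos : Fin n → ℝ × ℝ)
    (iL : Fin n) : Set (ℝ × ℝ) :=
  ⋃ m ∈ {m : Fin n | d.F.card + 1 ≤ (m : ℕ) ∧ m ≤ iL}, I.regionH pos m

/-- The horizontal line at height `t` belongs to `L^k`: it is a proper line of
order `k` lying in `H_{a+2} ∪ ⋯ ∪ H_L`. -/
def InLk {n : ℕ} (I : SPInstance n) (d : FQW I) (pos : Fin n → ℝ × ℝ)
    (iL : Fin n) (k : ℕ) (t : ℝ) : Prop :=
  I.ProperLine pos t ∧ LineInHUnion I d pos iL t ∧ (TypeOf I d pos t).card = k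

/-- `i` belongs to `R^k`: it is `LM(ℓ)` for some line `ℓ ∈ L^k`. -/
def InRk {n : ℕ} (I : SPInstance n) (d : FQW I) (pos : Fin n → ℝ × ℝ)
    (iL : Fin n) (k : ℕ) (i : Fin n) : Prop :=
  ∃ t : ℝ, InLk I d pos iL k t ∧ IsLM I d pos t i

/-- `i` is `LM^k`: the rectangle of `R^k` with smallest `x`-coordinate,
ties broken by largest `y`-coordinate. -/
def IsLMk {n : ℕ} (I : SPInstance n) (d : FQW I) (pos : Fin n → ℝ × ℝ)
    (iL : Fin n) (k : ℕ) (i : Fin n) : Prop :=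
  InRk I d pos iL k i ∧ ∀ j : Fin n, InRk I d pos iL k j →
    (pos i).1 < (pos j).1 ∨ ((pos i).1 = (pos j).1 ∧ (pos j).2 ≤ (pos i).2)

/-- `v = x_F^ℓ` for the line `ℓ` at height `t`: the right face `x + w` of the
rightmost rectangle of `F` intersecting `ℓ`, and `0` if there is none. -/
def IsXF {n : ℕ} (I : SPInstance n) (d : FQW I) (pos : Fin n → ℝ × ℝ)
    (t v : ℝ) : Prop :=
  ((∃ f ∈ d.F, I.Intersects pos f t ∧ v = (pos f).1 + (I.r f).w) ∧
    ∀ f ∈ d.F, I.Intersects pos f t → (pos f).1 + (I.r f).w ≤ v) ∨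
  ((∀ f ∈ d.F, ¬ I.Intersects pos f t) ∧ v = 0)

/-!
BL puts the rectangles of `F` side by side on the floor, as their total width is at most `W`.
Every rectangle of `Q` is at most as tall as `r_B`, on which `r_{a+1}` rests. Hence the position
`(0, h_max + h_{r_B})` is free for `r_L`: a rectangle of `Q` before `r_L` either starts to the right
of `w_{r_L}`, or it does not touch the left boundary and has a left supporter, which is narrower
than `r_L`, hence in `F` and on the floor, so the rectangle starts below `h_max`.
-/

open Filter Topology

theorem Set.Ioo_disjoint_Ioo_iff_of_lt {α : Type*} [LinearOrder α] [DenselyOrdered α]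
    {a₁ a₂ b₁ b₂ : α} (ha : a₁ < a₂) (hb : b₁ < b₂) :
    Disjoint (Set.Ioo a₁ a₂) (Set.Ioo b₁ b₂) ↔ a₂ ≤ b₁ ∨ b₂ ≤ a₁ := by
  rw [Set.Ioo_disjoint_Ioo]
  constructor
  · intro h
    by_contra! hc
    exact not_le.2 (max_lt (lt_min ha hc.2) (lt_min hc.1 hb)) h
  · rintro (h | h)
    · exact (min_le_left _ _).trans (h.trans (le_max_right _ _))
    · exact (min_le_right _ _).trans (h.trans (le_max_left _ _))

theorem disjoint_openBox_iff {R S : Rect} {p q : ℝ × ℝ}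
    (hRw : 0 < R.w) (hRh : 0 < R.h) (hSw : 0 < S.w) (hSh : 0 < S.h) :
    Disjoint (openBox R p) (openBox S q) ↔
      p.1 + R.w ≤ q.1 ∨ q.1 + S.w ≤ p.1 ∨ p.2 + R.h ≤ q.2 ∨ q.2 + S.h ≤ p.2 := by
  rw [openBox, openBox, Set.disjoint_prod,
    Set.Ioo_disjoint_Ioo_iff_of_lt (by linarith) (by linarith),
    Set.Ioo_disjoint_Ioo_iff_of_lt (by linarith) (by linarith), or_assoc]

namespace SPInstance

variable {n : ℕ} {I : SPInstance n} {pos : Fin n → ℝ × ℝ}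

theorem le_hmax (I : SPInstance n) (i : Fin n) : (I.r i).h ≤ I.hmax :=
  le_ciSup (f := fun i => (I.r i).h) (Set.finite_range _).bddAbove i

theorem disjoint_openBox_iff (I : SPInstance n) {i j : Fin n} {p q : ℝ × ℝ} :
    Disjoint (openBox (I.r i) p) (openBox (I.r j) q) ↔
      p.1 + (I.r i).w ≤ q.1 ∨ q.1 + (I.r j).w ≤ p.1 ∨
        p.2 + (I.r i).h ≤ q.2 ∨ q.2 + (I.r j).h ≤ p.2 :=
  _root_.disjoint_openBox_iff (I.w_pos i) (I.h_pos i) (I.w_pos j) (I.h_pos j)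

theorem IsBL.y_le (hBL : I.IsBL pos) {i : Fin n} {p : ℝ × ℝ} (hp : I.FeasibleAt pos i p) :
    (pos i).2 ≤ p.2 := by
  rcases (hBL i).2 p hp with h | h
  exacts [h.le, h.1.le]

theorem IsBL.x_le (hBL : I.IsBL pos) {i : Fin n} {x : ℝ}
    (hp : I.FeasibleAt pos i (x, (pos i).2)) : (pos i).1 ≤ x := by
  rcases (hBL i).2 _ hp with h | h
  exacts [absurd h (lt_irrefl _), h.2]

/-- Otherwise `i` could slide a little to the left. -/
theorem IsBL.exists_isLeftSupporter (hBL : I.IsBL pos) {i : Fin n} (hx : 0 < (pos i).1) :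
    ∃ j, I.IsLeftSupporter pos i j := by
  by_contra! hno
  obtain ⟨⟨-, hxW, hy⟩, hdisj⟩ := (hBL i).1
  have hslide : ∀ᶠ δ in 𝓝[>] (0 : ℝ), I.FeasibleAt pos i ((pos i).1 - δ, (pos i).2) := by
    have hpos : ∀ᶠ δ in 𝓝[>] (0 : ℝ), 0 < δ := self_mem_nhdsWithin
    have hlt : ∀ {c : ℝ}, 0 < c → ∀ᶠ δ in 𝓝[>] (0 : ℝ), δ < c := fun hc =>
      eventually_nhdsWithin_of_eventually_nhds (eventually_lt_nhds hc)
    refine (hpos.and ((hlt hx).and (eventually_all.2 fun j => ?_))).mono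
      fun δ ⟨hδ, hδx, h⟩ => ⟨⟨by simp only; linarith, by simp only; linarith, hy⟩, h⟩
    by_cases hji : j < i
    swap
    · exact Eventually.of_forall fun _ h => absurd h hji
    by_cases hsep : (pos i).2 + (I.r i).h ≤ (pos j).2 ∨ (pos j).2 + (I.r j).h ≤ (pos i).2
    · refine Eventually.of_forall fun δ _ => I.disjoint_openBox_iff.2 ?_
      simp only
      tauto
    push Not at hsep
    rcases I.disjoint_openBox_iff.1 (hdisj j hji) with h | h | h | h
    · filter_upwards [hpos] with δ hδ _
      exact I.disjoint_openBox_iff.2 (Or.inl (by simp only; linarith))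
    · have hgap : 0 < (pos i).1 - ((pos j).1 + (I.r j).w) :=
        sub_pos.2 (h.lt_of_ne fun he => hno j ⟨hji, he, hsep.1, hsep.2⟩)
      filter_upwards [hlt hgap] with δ hδ _
      exact I.disjoint_openBox_iff.2 (Or.inr (Or.inl (by simp only; linarith)))
    · exact absurd h (not_le.2 hsep.1)
    · exact absurd h (not_le.2 hsep.2)
  obtain ⟨δ, hfeas, hδ⟩ := (hslide.and self_mem_nhdsWithin).exists
  linarith [hBL.x_le hfeas]

variable (I) in
noncomputable def prefixWidth (k : ℕ) : ℝ :=
  ∑ j ∈ Finset.univ.filter (fun j : Fin n => (j : ℕ) < k), (I.r j).w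

theorem prefixWidth_nonneg (k : ℕ) : 0 ≤ I.prefixWidth k :=
  Finset.sum_nonneg fun j _ => (I.w_pos j).le

theorem prefixWidth_mono {k m : ℕ} (h : k ≤ m) : I.prefixWidth k ≤ I.prefixWidth m :=
  Finset.sum_le_sum_of_subset_of_nonneg (fun j hj => by simp at hj ⊢; omega)
    fun j _ _ => (I.w_pos j).le

theorem prefixWidth_succ (j : Fin n) :
    I.prefixWidth (j + 1) = I.prefixWidth j + (I.r j).w := by
  have : Finset.univ.filter (fun i : Fin n => (i : ℕ) < j + 1) =
      insert j (Finset.univ.filter (fun i : Fin n => (i : ℕ) < j)) := by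
    ext i
    simp only [Finset.mem_filter, Finset.mem_univ, true_and, Finset.mem_insert, Fin.ext_iff]
    omega
  rw [prefixWidth, prefixWidth, this, Finset.sum_insert (by simp), add_comm]

theorem prefixWidth_add_le {j : Fin n} {k : ℕ} (h : (j : ℕ) < k) :
    I.prefixWidth j + (I.r j).w ≤ I.prefixWidth k :=
  prefixWidth_succ j ▸ prefixWidth_mono h

theorem exists_prefixWidth_le_lt {K : ℕ} (hK : K ≤ n) {z : ℝ} (hz0 : 0 ≤ z)
    (hz : z < I.prefixWidth K) :
    ∃ j : Fin n, (j : ℕ) < K ∧ I.prefixWidth j ≤ z ∧ z < I.prefixWidth j + (I.r j).w := by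
  induction K with
  | zero => simp [prefixWidth] at hz; linarith
  | succ K ih =>
    rcases lt_or_ge z (I.prefixWidth K) with h | h
    · obtain ⟨j, hjK, hj⟩ := ih (by omega) h
      exact ⟨j, by omega, hj⟩
    · refine ⟨⟨K, hK⟩, K.lt_succ_self, h, ?_⟩
      rwa [← prefixWidth_succ]

theorem IsBL.pos_eq_prefixWidth (hBL : I.IsBL pos) {m : ℕ} (hm : I.prefixWidth m ≤ I.W)
    (k : Fin n) (hk : (k : ℕ) < m) : pos k = (I.prefixWidth k, 0) := by
  induction k using WellFoundedLT.induction with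
  | _ k ih =>
  obtain ⟨⟨hx0, -, hy0⟩, hdisj⟩ := (hBL k).1
  have hfeas : I.FeasibleAt pos k (I.prefixWidth k, 0) := by
    refine ⟨⟨prefixWidth_nonneg k, (prefixWidth_add_le hk).trans hm, le_rfl⟩, fun j hj => ?_⟩
    rw [ih j hj ((Fin.lt_def.1 hj).trans hk), I.disjoint_openBox_iff]
    exact Or.inr (Or.inl (prefixWidth_add_le hj))
  have hy : (pos k).2 = 0 := le_antisymm (hBL.y_le hfeas) hy0
  have hx : (pos k).1 ≤ I.prefixWidth k := hBL.x_le (hy ▸ hfeas)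
  refine Prod.ext (le_antisymm hx (not_lt.1 fun hlt => ?_)) hy
  obtain ⟨j, hjk, hj⟩ := exists_prefixWidth_le_lt k.isLt.le hx0 hlt
  have hsep := I.disjoint_openBox_iff.1 (hdisj j hjk)
  rw [ih j hjk (hjk.trans hk), hy] at hsep
  have := I.w_pos k; have := I.h_pos k; have := I.h_pos j
  rcases hsep with h | h | h | h <;> simp only at h <;> linarith

variable (I) in
/-- The step function of the fold defining `greedyF`. -/
noncomputable def greedyStep (σ : Equiv.Perm (Fin n)) (F : Finset (Fin n)) (k : Fin n) :
    Finset (Fin n) :=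
  if (I.r (σ k)).w + ∑ f ∈ F, (I.r f).w ≤ I.W then insert (σ k) F else F

variable (σ : Equiv.Perm (Fin n))

theorem subset_greedyStep (F : Finset (Fin n)) (k : Fin n) : F ⊆ I.greedyStep σ F k := by
  unfold greedyStep
  split_ifs
  exacts [Finset.subset_insert _ _, subset_rfl]

theorem subset_foldl_greedyStep (l : List (Fin n)) (F : Finset (Fin n)) :
    F ⊆ l.foldl (I.greedyStep σ) F := by
  induction l generalizing F with
  | nil => exact subset_rfl
  | cons k l ih => exact (subset_greedyStep σ F k).trans (ih _)

theorem sum_foldl_greedyStep_le (l : List (Fin n)) {F : Finset (Fin n)}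
    (hF : ∑ f ∈ F, (I.r f).w ≤ I.W) : ∑ f ∈ l.foldl (I.greedyStep σ) F, (I.r f).w ≤ I.W := by
  induction l generalizing F with
  | nil => exact hF
  | cons k l ih =>
    refine ih ?_
    unfold greedyStep
    split_ifs with h
    · by_cases hk : σ k ∈ F
      · rwa [Finset.insert_eq_of_mem hk]
      · rwa [Finset.sum_insert hk]
    · exact hF

theorem mem_foldl_greedyStep {l : List (Fin n)} {F : Finset (Fin n)} {f : Fin n}
    (hf : f ∈ l.foldl (I.greedyStep σ) F) : f ∈ F ∨ ∃ k ∈ l, σ k = f := by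
  induction l generalizing F with
  | nil => exact Or.inl hf
  | cons k l ih =>
    rcases ih hf with h | ⟨j, hj, rfl⟩
    · unfold greedyStep at h
      split_ifs at h
      · rcases Finset.mem_insert.1 h with rfl | h
        exacts [Or.inr ⟨k, List.mem_cons_self, rfl⟩, Or.inl h]
      · exact Or.inl h
    · exact Or.inr ⟨j, List.mem_cons_of_mem _ hj, rfl⟩

theorem sum_greedyF_le : ∑ f ∈ I.greedyF σ, (I.r f).w ≤ I.W :=
  sum_foldl_greedyStep_le σ _ (by simpa using I.W_pos.le)

theorem exists_greedyF_blocking {q : Fin n} (hq : q ∉ I.greedyF σ) :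
    ∃ P ⊆ I.greedyF σ, (∀ f ∈ P, σ.symm f < σ.symm q) ∧
      I.W < (I.r q).w + ∑ f ∈ P, (I.r f).w := by
  set k := σ.symm q
  set P := ((List.finRange n).take k).foldl (I.greedyStep σ) ∅
  have hk : (k : ℕ) < (List.finRange n).length := by simp
  have hsplit : I.greedyF σ = ((List.finRange n).drop (k + 1)).foldl (I.greedyStep σ)
      (I.greedyStep σ P k) := by
    have hl := List.take_append_drop k (List.finRange n)
    rw [List.drop_eq_getElem_cons hk, List.getElem_finRange] at hl
    change (List.finRange n).foldl (I.greedyStep σ) ∅ = _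
    conv_lhs => rw [← hl]
    rw [List.foldl_append, List.foldl_cons]
    rfl
  refine ⟨P, (subset_greedyStep σ P k).trans (hsplit ▸ subset_foldl_greedyStep σ _ _),
    fun f hf => ?_, not_le.1 fun hfit => hq ?_⟩
  · obtain ⟨j, hj, rfl⟩ := (mem_foldl_greedyStep σ hf).resolve_left (Finset.notMem_empty f)
    obtain ⟨i, hi, rfl⟩ := List.mem_take_iff_getElem.1 hj
    simp only [Equiv.symm_apply_apply, Fin.lt_def, List.getElem_finRange]
    exact lt_of_lt_of_le hi (min_le_left _ _)
  · rw [hsplit]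
    refine subset_foldl_greedyStep σ _ _ ?_
    rw [greedyStep, Equiv.apply_symm_apply, if_pos hfit]
    exact Finset.mem_insert_self _ _

end SPInstance

namespace FQW

open SPInstance

variable {n : ℕ} {I : SPInstance n} {d : FQW I} {pos : Fin n → ℝ × ℝ}

theorem IsOrdered.F_eq (hord : d.IsOrdered) :
    d.F = Finset.univ.filter (fun j : Fin n => (j : ℕ) < d.F.card) := by
  ext j
  simp [hord.1 j]

theorem IsOrdered.pos_eq_prefixWidth (hord : d.IsOrdered) (hBL : I.IsBL pos) {k : Fin n}
    (hk : (k : ℕ) < d.F.card) : pos k = (I.prefixWidth k, 0) :=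
  hBL.pos_eq_prefixWidth (by rw [prefixWidth, ← hord.F_eq]; exact sum_greedyF_le d.σ) k hk

/-- `r_{a+1}` rests on `r_B` at height `h_{r_B}`. A taller `r_q ∈ Q` was rejected from `F` because
rectangles of `F` at least as tall fill the floor beyond `W - w_{r_q} ≥ x_{r_{a+1}}`, and the one
below the left corner of `r_{a+1}` would then cut into it. -/
theorem IsOrdered.h_le_of_mem_Q (hord : d.IsOrdered) (hBL : I.IsBL pos) {ia iB q : Fin n}
    (hia : (ia : ℕ) = d.F.card) (hiB : I.IsBottomSupporter pos ia iB) (hq : q ∈ d.Q) :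
    (I.r q).h ≤ (I.r iB).h := by
  by_contra! hqB
  have hy : (pos ia).2 = (I.r iB).h := by
    have := hiB.2.1
    rw [hord.pos_eq_prefixWidth hBL (hia ▸ hiB.1)] at this
    simpa using this.symm
  obtain ⟨P, hPF, hPq, hblock⟩ := exists_greedyF_blocking d.σ (Finset.mem_filter.1 hq).2.1
  set c := P.sup fun f => (f : ℕ) + 1
  have hPc : ∑ f ∈ P, (I.r f).w ≤ I.prefixWidth c := by
    refine Finset.sum_le_sum_of_subset_of_nonneg (fun f hf => ?_) fun j _ _ => (I.w_pos j).le
    simp only [Finset.mem_filter, Finset.mem_univ, true_and]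
    exact Finset.le_sup (f := fun f : Fin n => (f : ℕ) + 1) hf
  have hc : ∀ j : Fin n, (j : ℕ) < c → (j : ℕ) < d.F.card ∧ (I.r q).h ≤ (I.r j).h := by
    intro j hj
    obtain ⟨f, hf, hjf⟩ := Finset.lt_sup_iff.1 hj
    have hfF := (hord.1 f).1 (hPF hf)
    have hqf : (I.r q).h ≤ (I.r f).h := by simpa using d.sorted _ _ (hPq f hf).le
    exact ⟨by omega, hqf.trans (hord.2.2.1 j f (by omega) hfF)⟩
  obtain ⟨⟨hx0, hxW, -⟩, hdisj⟩ := (hBL ia).1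
  have hq' := (hord.2.1 q).1 hq
  have hwq : (I.r q).w ≤ (I.r ia).w := hord.2.2.2 ia q hia.ge (by omega) hq'.2
  obtain ⟨j, hjc, hj⟩ :=
    exists_prefixWidth_le_lt (Finset.sup_le fun (f : Fin n) _ => f.isLt) hx0 (by linarith)
  obtain ⟨hjF, hjh⟩ := hc j hjc
  have hsep := I.disjoint_openBox_iff.1 (hdisj j (by rw [Fin.lt_def]; omega))
  rw [hord.pos_eq_prefixWidth hBL hjF, hy] at hsep
  have := I.w_pos ia; have := I.h_pos ia; have := I.h_pos iB
  rcases hsep with h | h | h | h <;> simp only at h <;> linarith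

/-- The left supporter of `r_j` is narrower than `r_i ∈ Q`, so it belongs to `F` and lies on the
floor. -/
theorem IsOrdered.y_lt_hmax (hord : d.IsOrdered) (hBL : I.IsBL pos) {i j : Fin n}
    (hi : i ∈ d.Q) (hji : j ≤ i) (hx0 : 0 < (pos j).1) (hx : (pos j).1 < (I.r i).w) :
    (pos j).2 < I.hmax := by
  obtain ⟨l, hlj, hlx, -, hly⟩ := hBL.exists_isLeftSupporter hx0
  have hi' := (hord.2.1 i).1 hi
  have hlF : (l : ℕ) < d.F.card := by
    by_contra! hlF
    have := hord.2.2.2 l i hlF (by rw [Fin.lt_def] at hlj; rw [Fin.le_def] at hji; omega) hi'.2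
    linarith [(hBL l).1.1.1]
  rw [hord.pos_eq_prefixWidth hBL hlF] at hly
  simp only at hly
  linarith [I.le_hmax l]

end FQW

theorem left_rect_height_bound_general {n : ℕ} (I : SPInstance n) (d : FQW I)
    (hord : d.IsOrdered) (pos : Fin n → ℝ × ℝ) (hBL : I.IsBL pos)
    (ia : Fin n) (hia : (ia : ℕ) = d.F.card)
    (iB : Fin n) (hiB : I.IsLeftmostBottomSupporter pos ia iB)
    (iT iL : Fin n) (hiT : IsTopRect I d pos iT)
    (hiL : IsLeftRect I d pos iT iL) :
    (pos iL).2 ≤ I.hmax + (I.r iB).h := by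
  have hiLQ : iL ∈ d.Q := by
    rcases hiL with ⟨h, -⟩ | ⟨-, rfl⟩
    exacts [h, hiT.1]
  suffices hfeas : I.FeasibleAt pos iL (0, I.hmax + (I.r iB).h) from hBL.y_le hfeas
  refine ⟨⟨le_rfl, by simpa using I.w_le_W iL, by simp only; linarith [I.le_hmax iB, I.h_pos iB]⟩,
    fun j hj => I.disjoint_openBox_iff.2 ?_⟩
  simp only [zero_add]
  by_cases hjF : (j : ℕ) < d.F.card
  · rw [hord.pos_eq_prefixWidth hBL hjF]
    exact Or.inr (Or.inr (Or.inr (by simp only; linarith [I.le_hmax j, I.h_pos iB])))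
  have hjQ : j ∈ d.Q := (hord.2.1 j).2 ⟨not_lt.1 hjF, by have := (hord.2.1 iL).1 hiLQ; omega⟩
  rcases le_or_gt (I.r iL).w (pos j).1 with hx | hx
  · exact Or.inl hx
  have hx0 : 0 < (pos j).1 := by
    refine lt_of_le_of_ne (hBL j).1.1.1 fun h0 => ?_
    rcases hiL with ⟨-, -, hfirst⟩ | ⟨hnone, -⟩
    exacts [absurd (hfirst j hjQ h0.symm) (not_le.2 hj), hnone j hjQ h0.symm]
  have hy := hord.y_lt_hmax hBL hiLQ hj.le hx0 hx
  have hh := hord.h_le_of_mem_Q hBL hia hiB.1 hjQ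
  exact Or.inr (Or.inr (Or.inr (by linarith)))

/-- **Lemma.** In the BL packing of an FQW-ordered instance with `Q ≠ ∅`, the
left rectangle `r_L` is placed at height `y_{r_L} ≤ h_max + h_{r_B}`. -/
theorem left_rect_height_bound {n : ℕ} (I : SPInstance n) (d : FQW I)
    (hord : d.IsOrdered) (pos : Fin n → ℝ × ℝ) (hBL : I.IsBL pos)
    (hQ : d.Q.Nonempty) (ia : Fin n) (hia : (ia : ℕ) = d.F.card)
    (iB : Fin n) (hiB : I.IsLeftmostBottomSupporter pos ia iB)
    (iT iL : Fin n) (hiT : IsTopRect I d pos iT)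
    (hiL : IsLeftRect I d pos iT iL) :
    (pos iL).2 ≤ I.hmax + (I.r iB).h :=
  left_rect_height_bound_general I d hord pos hBL ia hia iB hiB iT iL hiT hiL
end

section
/- Let (W, r_1, …, r_n) be a Strip Packing instance whose rectangles are listed in the FQW-ordering with Q ≠ ∅, and consider its BL packing. Let ℓ be a proper horizontal line in H_{a+2} ∪ ⋯ ∪ H_L with T(ℓ) ≠ ∅. Then LM(ℓ) has a left supporter belonging to F. -/
open scoped Classical
open MeasureTheory

/-! ### Auxiliary lemmas -/

/-- Characterization of disjointness of two open boxes with positive dimensions. -/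
lemma disjoint_openBox_iff_s12 {R1 R2 : Rect} (h1w : 0 < R1.w) (h1h : 0 < R1.h)
    (h2w : 0 < R2.w) (h2h : 0 < R2.h) (p1 p2 : ℝ × ℝ) :
    Disjoint (openBox R1 p1) (openBox R2 p2) ↔
      (p1.1 + R1.w ≤ p2.1 ∨ p2.1 + R2.w ≤ p1.1 ∨
        p1.2 + R1.h ≤ p2.2 ∨ p2.2 + R2.h ≤ p1.2) := by
  constructor
  · intro hd
    by_contra hc
    push_neg at hc
    obtain ⟨hA, hB, hC, hD⟩ := hc
    have hx : max p1.1 p2.1 < min (p1.1 + R1.w) (p2.1 + R2.w) := by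
      rw [max_lt_iff]
      constructor <;> rw [lt_min_iff] <;> constructor <;> linarith
    have hy : max p1.2 p2.2 < min (p1.2 + R1.h) (p2.2 + R2.h) := by
      rw [max_lt_iff]
      constructor <;> rw [lt_min_iff] <;> constructor <;> linarith
    set x0 : ℝ := (max p1.1 p2.1 + min (p1.1 + R1.w) (p2.1 + R2.w)) / 2 with hx0
    set y0 : ℝ := (max p1.2 p2.2 + min (p1.2 + R1.h) (p2.2 + R2.h)) / 2 with hy0
    have hx1 : max p1.1 p2.1 < x0 := by rw [hx0]; linarith
    have hx2 : x0 < min (p1.1 + R1.w) (p2.1 + R2.w) := by rw [hx0]; linarith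
    have hy1 : max p1.2 p2.2 < y0 := by rw [hy0]; linarith
    have hy2 : y0 < min (p1.2 + R1.h) (p2.2 + R2.h) := by rw [hy0]; linarith
    have hmem1 : (x0, y0) ∈ openBox R1 p1 := by
      simp only [openBox, Set.mem_prod, Set.mem_Ioo]
      refine ⟨⟨?_, ?_⟩, ?_, ?_⟩
      · exact lt_of_le_of_lt (le_max_left _ _) hx1
      · exact lt_of_lt_of_le hx2 (min_le_left _ _)
      · exact lt_of_le_of_lt (le_max_left _ _) hy1
      · exact lt_of_lt_of_le hy2 (min_le_left _ _)
    have hmem2 : (x0, y0) ∈ openBox R2 p2 := by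
      simp only [openBox, Set.mem_prod, Set.mem_Ioo]
      refine ⟨⟨?_, ?_⟩, ?_, ?_⟩
      · exact lt_of_le_of_lt (le_max_right _ _) hx1
      · exact lt_of_lt_of_le hx2 (min_le_right _ _)
      · exact lt_of_le_of_lt (le_max_right _ _) hy1
      · exact lt_of_lt_of_le hy2 (min_le_right _ _)
    exact Set.not_disjoint_iff.2 ⟨(x0, y0), hmem1, hmem2⟩ hd
  · intro h
    rw [Set.disjoint_left]
    intro z hz1 hz2
    simp only [openBox, Set.mem_prod, Set.mem_Ioo] at hz1 hz2
    obtain ⟨⟨a1, a2⟩, a3, a4⟩ := hz1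
    obtain ⟨⟨b1, b2⟩, b3, b4⟩ := hz2
    rcases h with h | h | h | h <;> linarith

/-- Each rectangle below index `i` has its `y`-coordinate at most `maxYBelow pos i`. -/
lemma le_maxYBelow {n : ℕ} (pos : Fin n → ℝ × ℝ) (i : ℕ) (j : Fin n)
    (hj : (j : ℕ) < i) : (pos j).2 ≤ maxYBelow pos i := by
  have h := le_ciSup (f := fun k : {k : Fin n // (k : ℕ) < i} => (pos (k : Fin n)).2)
    (Set.Finite.bddAbove (Set.finite_range _)) ⟨j, hj⟩
  simpa [maxYBelow] using h

/-- The total width of the greedy set `F` is at most `W`. -/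
lemma greedyF_sum_le {n : ℕ} (I : SPInstance n) (σ : Equiv.Perm (Fin n)) :
    ∑ f ∈ I.greedyF σ, (I.r f).w ≤ I.W := by
  have key : ∀ (l : List (Fin n)) (F0 : Finset (Fin n)),
      (∑ f ∈ F0, (I.r f).w ≤ I.W) →
      ∑ f ∈ l.foldl
          (fun F k =>
            if (I.r (σ k)).w + ∑ f ∈ F, (I.r f).w ≤ I.W then insert (σ k) F else F)
          F0, (I.r f).w ≤ I.W := by
    intro l
    induction l with
    | nil => intro F0 h; exact h
    | cons k l ih =>
      intro F0 h
      simp only [List.foldl_cons]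
      apply ih
      split_ifs with hcond
      · by_cases hmem : σ k ∈ F0
        · rwa [Finset.insert_eq_self.2 hmem]
        · rw [Finset.sum_insert hmem]; exact hcond
      · exact h
  have h0 : ∑ f ∈ (∅ : Finset (Fin n)), (I.r f).w ≤ I.W := by
    simp [le_of_lt I.W_pos]
  exact key (List.finRange n) ∅ h0

/-- In a BL packing of an FQW-ordered instance, the rectangles of `F` sit at
the bottom of the strip, packed consecutively from left to right. -/
lemma F_bottom_aux {n : ℕ} (I : SPInstance n) (d : FQW I) (hord : d.IsOrdered)
    (pos : Fin n → ℝ × ℝ) (hBL : I.IsBL pos) :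
    ∀ N : ℕ, ∀ j : Fin n, (j : ℕ) < N → (j : ℕ) < d.F.card →
      (pos j).2 = 0 ∧ (pos j).1 + (I.r j).w ≤
        ∑ i ∈ Finset.univ.filter (fun i : Fin n => (i : ℕ) ≤ (j : ℕ)), (I.r i).w := by
  intro N
  induction N with
  | zero => intro j hj; omega
  | succ N ih =>
    intro j hjN hjF
    set Pset : Finset (Fin n) :=
      Finset.univ.filter (fun i : Fin n => (i : ℕ) < (j : ℕ)) with hPset
    set P : ℝ := ∑ i ∈ Pset, (I.r i).w with hP
    have hP0 : 0 ≤ P := Finset.sum_nonneg fun i _ => le_of_lt (I.w_pos i)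
    have hjnot : j ∉ Pset := by simp [hPset]
    have hins : (Finset.univ.filter (fun i : Fin n => (i : ℕ) ≤ (j : ℕ)))
        = insert j Pset := by
      ext i
      simp only [Finset.mem_filter, Finset.mem_univ, true_and, Finset.mem_insert, hPset]
      constructor
      · intro h
        rcases eq_or_lt_of_le h with h | h
        · exact Or.inl (Fin.ext h)
        · exact Or.inr h
      · rintro (rfl | h)
        · exact le_refl _
        · exact le_of_lt h
    have hsum_le : P + (I.r j).w ≤ I.W := by
      have hsub : insert j Pset ⊆ d.F := by
        intro i hi
        rcases Finset.mem_insert.1 hi with rfl | hi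
        · exact (hord.1 i).2 hjF
        · have h1 : (i : ℕ) < (j : ℕ) := by
            simpa [hPset] using hi
          exact (hord.1 i).2 (lt_trans h1 hjF)
      have h1 : ∑ i ∈ insert j Pset, (I.r i).w ≤ ∑ i ∈ d.F, (I.r i).w :=
        Finset.sum_le_sum_of_subset_of_nonneg hsub fun i _ _ => le_of_lt (I.w_pos i)
      have h2 : ∑ i ∈ d.F, (I.r i).w ≤ I.W := greedyF_sum_le I d.σ
      rw [Finset.sum_insert hjnot] at h1
      linarith
    have hfeas : I.FeasibleAt pos j (P, 0) := by
      refine ⟨⟨hP0, by simpa using hsum_le, le_refl 0⟩, ?_⟩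
      intro i hij
      have hij' : (i : ℕ) < (j : ℕ) := hij
      have hiF : (i : ℕ) < d.F.card := lt_trans hij' hjF
      have hIH := ih i (by omega) hiF
      rw [disjoint_openBox_iff_s12 (I.w_pos j) (I.h_pos j) (I.w_pos i) (I.h_pos i)]
      right; left
      have hsub2 : Finset.univ.filter (fun k : Fin n => (k : ℕ) ≤ (i : ℕ)) ⊆ Pset := by
        intro k hk
        have h1 : (k : ℕ) ≤ (i : ℕ) := by simpa using hk
        simp only [hPset, Finset.mem_filter, Finset.mem_univ, true_and]
        omega
      calc (pos i).1 + (I.r i).w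
          ≤ ∑ k ∈ Finset.univ.filter (fun k : Fin n => (k : ℕ) ≤ (i : ℕ)), (I.r k).w :=
            hIH.2
        _ ≤ P :=
            Finset.sum_le_sum_of_subset_of_nonneg hsub2 fun k _ _ => le_of_lt (I.w_pos k)
    have hBLj := (hBL j).2 (P, 0) hfeas
    have hy0 : 0 ≤ (pos j).2 := ((hBL j).1).1.2.2
    rcases hBLj with h | ⟨h1, h2⟩
    · exact absurd h (not_lt.2 hy0)
    · refine ⟨h1, ?_⟩
      rw [hins, Finset.sum_insert hjnot]
      have h3 : (pos j).1 ≤ P := h2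
      linarith

/-- The rectangles of `F` are at the bottom of the strip. -/
lemma F_bottom {n : ℕ} (I : SPInstance n) (d : FQW I) (hord : d.IsOrdered)
    (pos : Fin n → ℝ × ℝ) (hBL : I.IsBL pos) (j : Fin n)
    (hj : (j : ℕ) < d.F.card) : (pos j).2 = 0 :=
  (F_bottom_aux I d hord pos hBL ((j : ℕ) + 1) j (by omega) hj).1

/-- In a BL packing, every rectangle not touching the left strip boundary has
a left supporter. -/
lemma exists_left_supporter {n : ℕ} (I : SPInstance n) (pos : Fin n → ℝ × ℝ)
    (hBL : I.IsBL pos) (i : Fin n) (hx : 0 < (pos i).1) :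
    ∃ j : Fin n, I.IsLeftSupporter pos i j := by
  by_contra hno
  push_neg at hno
  set D : Finset (Fin n) := Finset.univ.filter (fun j : Fin n =>
    j < i ∧ (pos j).1 + (I.r j).w < (pos i).1 ∧
    (pos j).2 < (pos i).2 + (I.r i).h ∧ (pos i).2 < (pos j).2 + (I.r j).h) with hDdef
  set u : ℝ := if hD : D.Nonempty then D.sup' hD (fun j => (pos j).1 + (I.r j).w)
    else 0 with hudef
  have hu0 : 0 ≤ u := by
    rw [hudef]
    split_ifs with hD
    · obtain ⟨j, hj⟩ := hD
      refine le_trans ?_ (Finset.le_sup' (fun j => (pos j).1 + (I.r j).w) hj)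
      have h1 := ((hBL j).1).1.1
      have h2 := le_of_lt (I.w_pos j)
      linarith
    · exact le_refl 0
  have hui : u < (pos i).1 := by
    rw [hudef]
    split_ifs with hD
    · rw [Finset.sup'_lt_iff]
      intro j hj
      exact ((Finset.mem_filter.1 hj).2).2.1
    · exact hx
  have hfeas : I.FeasibleAt pos i (u, (pos i).2) := by
    refine ⟨⟨hu0, ?_, ((hBL i).1).1.2.2⟩, ?_⟩
    · have h1 := ((hBL i).1).1.2.1
      simp only
      linarith
    · intro j hji
      rw [disjoint_openBox_iff_s12 (I.w_pos i) (I.h_pos i) (I.w_pos j) (I.h_pos j)]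
      by_cases hov : (pos j).2 < (pos i).2 + (I.r i).h ∧ (pos i).2 < (pos j).2 + (I.r j).h
      · have hdo := ((hBL i).1).2 j hji
        rw [disjoint_openBox_iff_s12 (I.w_pos i) (I.h_pos i) (I.w_pos j) (I.h_pos j)] at hdo
        rcases hdo with h | h | h | h
        · left; simp only; linarith
        · have hne : (pos j).1 + (I.r j).w ≠ (pos i).1 := by
            intro he
            exact hno j ⟨hji, he, hov.1, hov.2⟩
          have hlt : (pos j).1 + (I.r j).w < (pos i).1 := lt_of_le_of_ne h hne
          have hjD : j ∈ D := by
            rw [hDdef, Finset.mem_filter]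
            exact ⟨Finset.mem_univ _, hji, hlt, hov.1, hov.2⟩
          right; left
          have h2 : (pos j).1 + (I.r j).w ≤ u := by
            rw [hudef, dif_pos ⟨j, hjD⟩]
            exact Finset.le_sup' (fun j => (pos j).1 + (I.r j).w) hjD
          exact h2
        · exact absurd h (not_le.2 hov.1)
        · exact absurd h (not_le.2 hov.2)
      · push_neg at hov
        by_cases h1 : (pos j).2 < (pos i).2 + (I.r i).h
        · right; right; right; exact hov h1
        · right; right; left; exact not_lt.1 h1
  have hmin := (hBL i).2 (u, (pos i).2) hfeas
  rcases hmin with h | ⟨h1, h2⟩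
  · exact absurd h (lt_irrefl _)
  · have : (pos i).1 ≤ u := h2
    linarith

/-- **Lemma.** For every proper horizontal line `ℓ` in `H_{a+2} ∪ ⋯ ∪ H_L`
with `T(ℓ) ≠ ∅`, the rectangle `LM(ℓ)` has a left supporter belonging to `F`. -/
theorem LM_left_supporter_in_F {n : ℕ} (I : SPInstance n) (d : FQW I)
    (hord : d.IsOrdered) (pos : Fin n → ℝ × ℝ) (hBL : I.IsBL pos)
    (hQ : d.Q.Nonempty) (iT iL : Fin n) (hiT : IsTopRect I d pos iT)
    (hiL : IsLeftRect I d pos iT iL)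
    (t : ℝ) (hproper : I.ProperLine pos t) (hline : LineInHUnion I d pos iL t)
    (iLM : Fin n) (hLM : IsLM I d pos t iLM) :
    ∃ f ∈ d.F, I.IsLeftSupporter pos iLM f := by
  by_contra hcon
  push_neg at hcon
  obtain ⟨m, hm1, hm2, hm3, hm4⟩ := hline
  have hmemT := hLM.1
  rw [TypeOf, Finset.mem_filter] at hmemT
  obtain ⟨-, hQmem, hInt, hIdx⟩ := hmemT
  have hbelow : ∀ j : Fin n, (j : ℕ) < (m : ℕ) → (pos j).2 ≤ t :=
    fun j hj => le_trans (le_maxYBelow pos (m : ℕ) j hj) hm3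
  have hqm : (iLM : ℕ) < (m : ℕ) := by
    by_contra h
    push_neg at h
    exact absurd (hIdx m (Fin.le_def.2 h)) (not_le.2 hm4)
  have hiLQ : iL ∈ d.Q := by
    rcases hiL with ⟨h, -, -⟩ | ⟨-, h⟩
    · exact h
    · rw [h]; exact hiT.1
  have hmlt : (m : ℕ) < d.F.card + d.Q.card := by
    have h1 := ((hord.2.1 iL).1 hiLQ).2
    have h2 : (m : ℕ) ≤ (iL : ℕ) := Fin.le_def.1 hm2
    omega
  have hxq0 : 0 < (pos iLM).1 := by
    have h0 : 0 ≤ (pos iLM).1 := ((hBL iLM).1).1.1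
    rcases hiL with ⟨-, -, hmin⟩ | ⟨hne, -⟩
    · rcases eq_or_lt_of_le h0 with h | h
      · exfalso
        have h1 := Fin.le_def.1 (hmin iLM hQmem h.symm)
        have h2 : (m : ℕ) ≤ (iL : ℕ) := Fin.le_def.1 hm2
        omega
      · exact h
    · exact lt_of_le_of_ne h0 (Ne.symm (hne iLM hQmem))
  obtain ⟨s, hs⟩ := exists_left_supporter I pos hBL iLM hxq0
  obtain ⟨hsq, hsx, hsy1, hsy2⟩ := hs
  have hsF : d.F.card ≤ (s : ℕ) := by
    by_contra h
    push_neg at h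
    exact hcon s ((hord.1 s).2 h) ⟨hsq, hsx, hsy1, hsy2⟩
  have hsmN : (s : ℕ) < (m : ℕ) := lt_trans (Fin.lt_def.1 hsq) hqm
  have hwm : (I.r m).w ≤ (I.r s).w := hord.2.2.2 s m hsF (le_of_lt hsmN) hmlt
  have hxs0 : 0 ≤ (pos s).1 := ((hBL s).1).1.1
  have hwin : (pos s).1 + (I.r m).w ≤ (pos iLM).1 := by
    rw [← hsx]; linarith
  set D : Finset (Fin n) := Finset.univ.filter (fun j : Fin n =>
    j < m ∧ (pos j).2 + (I.r j).h ≤ t ∧ (pos j).1 < (pos s).1 + (I.r m).w ∧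
      (pos s).1 < (pos j).1 + (I.r j).w) with hDdef
  set Th : ℝ := if hD : D.Nonempty then D.sup' hD (fun j => (pos j).2 + (I.r j).h)
    else 0 with hThdef
  have ht0 : 0 ≤ t := le_trans ((hBL iLM).1).1.2.2 (le_of_lt hInt.1)
  have hTh0 : 0 ≤ Th := by
    rw [hThdef]
    split_ifs with hD
    · obtain ⟨j, hj⟩ := hD
      refine le_trans ?_ (Finset.le_sup' (fun j => (pos j).2 + (I.r j).h) hj)
      have h1 := ((hBL j).1).1.2.2
      have h2 := le_of_lt (I.h_pos j)
      linarith
    · exact le_refl 0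
  have hTht : Th ≤ t := by
    rw [hThdef]
    split_ifs with hD
    · rw [Finset.sup'_le_iff]
      intro j hj
      exact ((Finset.mem_filter.1 hj).2).2.1
    · exact ht0
  have hfeas : I.FeasibleAt pos m ((pos s).1, Th) := by
    refine ⟨⟨hxs0, ?_, hTh0⟩, ?_⟩
    · have hq1 := ((hBL iLM).1).1.2.1
      have hq2 := le_of_lt (I.w_pos iLM)
      simp only
      linarith
    · intro j hjm
      rw [disjoint_openBox_iff_s12 (I.w_pos m) (I.h_pos m) (I.w_pos j) (I.h_pos j)]
      by_contra hc
      push_neg at hc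
      obtain ⟨hA, hB, hC, hD'⟩ := hc
      simp only at hA hB hC hD'
      have hjmN : (j : ℕ) < (m : ℕ) := Fin.lt_def.1 hjm
      have hyj : (pos j).2 ≤ t := hbelow j hjmN
      by_cases htop : (pos j).2 + (I.r j).h ≤ t
      · have hjD : j ∈ D := by
          rw [hDdef, Finset.mem_filter]
          exact ⟨Finset.mem_univ _, hjm, htop, hA, hB⟩
        have h1 : (pos j).2 + (I.r j).h ≤ Th := by
          rw [hThdef, dif_pos ⟨j, hjD⟩]
          exact Finset.le_sup' (fun j => (pos j).2 + (I.r j).h) hjD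
        linarith
      · push_neg at htop
        have hyj' : (pos j).2 < t := lt_of_le_of_ne hyj (Ne.symm (hproper j).1)
        by_cases hjF : (j : ℕ) < d.F.card
        · have hy0 : (pos j).2 = 0 := F_bottom I d hord pos hBL j hjF
          have hjs : j < s := Fin.lt_def.2 (lt_of_lt_of_le hjF hsF)
          have hdisj := ((hBL s).1).2 j hjs
          rw [disjoint_openBox_iff_s12 (I.w_pos s) (I.h_pos s) (I.w_pos j) (I.h_pos j)]
            at hdisj
          have hyst : (pos s).2 ≤ t := hbelow s hsmN
          have hhs := I.h_pos s
          have hys0 : 0 ≤ (pos s).2 := ((hBL s).1).1.2.2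
          rcases hdisj with h | h | h | h
          · linarith
          · linarith
          · linarith
          · linarith
        · have hjQ : j ∈ d.Q := (hord.2.1 j).2 ⟨not_lt.1 hjF, lt_trans hjmN hmlt⟩
          have hjT : j ∈ TypeOf I d pos t := by
            rw [TypeOf, Finset.mem_filter]
            exact ⟨Finset.mem_univ _, hjQ, ⟨hyj', htop⟩, fun k hk =>
              hbelow k (lt_of_le_of_lt (Fin.le_def.1 hk) hjmN)⟩
          have hminx := hLM.2 j hjT
          linarith
  have hfin := (hBL m).2 ((pos s).1, Th) hfeas
  rcases hfin with h | ⟨h1, -⟩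
  · have h' : (pos m).2 < Th := h
    linarith
  · have h' : (pos m).2 = Th := h1
    linarith
end
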